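/- (Birman–Schwinger principle.) Let m ≥ 0 and let V ∈ ℓ^∞(ℤ, ℂ^{2×2}) be a bounded potential. Then for every λ ∉ σ(D₀): λ ∈ σ(D_V) if and only if −1 ∈ σ(K(λ)). -/

import Mathlib

open scoped ComplexOrder
open Matrix

noncomputable section

abbrev Mat2 : Type := Matrix (Fin 2) (Fin 2) ℂ
abbrev Vec2 : Type := EuclideanSpace ℂ (Fin 2)
abbrev Hsp : Type := lp (fun _ : ℤ => Vec2) 2

/-- A `2×2` complex matrix acting on `ℂ²` as a continuous linear map. -/
def mAct (A : Mat2) : Vec2 →L[ℂ] Vec2 := Matrix.toEuclideanCLM (𝕜 := ℂ) A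

/-- The spectral (operator) norm of a `2×2` complex matrix. -/
def specNorm (A : Mat2) : ℝ := ‖mAct A‖

/-- The Hilbert–Schmidt (Frobenius) norm of a `2×2` complex matrix. -/
def hsNorm (A : Mat2) : ℝ := Real.sqrt (∑ i, ∑ j, ‖A i j‖ ^ 2)

def bMat (m : ℝ) : Mat2 := !![(-m : ℂ), 1; 1, (m : ℂ)]

def aMat : Mat2 := !![0, 0; -1, 0]

/-- `D0` is the free discrete Dirac operator with mass `m`. -/
def IsFreeDirac (m : ℝ) (D0 : Hsp →L[ℂ] Hsp) : Prop :=
  ∀ u : Hsp, ∀ n : ℤ,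
    (D0 u) n = mAct aMat.transpose (u (n - 1)) + mAct (bMat m) (u n) + mAct aMat (u (n + 1))

/-- `Vop` is the block-diagonal operator with blocks `υ n`. -/
def IsBlockDiagOp (υ : ℤ → Mat2) (Vop : Hsp →L[ℂ] Hsp) : Prop :=
  ∀ u : Hsp, ∀ n : ℤ, (Vop u) n = mAct (υ n) (u n)

/-- The spectrum `[−√(m²+4), −m] ∪ [m, √(m²+4)]` as a subset of `ℂ`. -/
def sigma0 (m : ℝ) : Set ℂ :=
  Complex.ofReal '' (Set.Icc (-Real.sqrt (m ^ 2 + 4)) (-m) ∪ Set.Icc m (Real.sqrt (m ^ 2 + 4)))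

def T0mat (m : ℝ) (lam k : ℂ) : Mat2 :=
  (k⁻¹ - k)⁻¹ • !![lam - m, 1 - k; 1 - k, lam + m]

def T1mat (m : ℝ) (lam k : ℂ) : Mat2 :=
  (k * (k⁻¹ - k)⁻¹) • !![lam - m, 1 - k; 1 - k⁻¹, lam + m]

def Tmat (m : ℝ) (lam k : ℂ) : ℤ → Mat2 := fun j =>
  if j = 0 then T0mat m lam k
  else if 0 < j then k ^ (j.toNat - 1) • T1mat m lam k
  else (k ^ ((-j).toNat - 1) • T1mat m lam k).transpose

/-- The old Mathlib `Matrix.PosSemidef.sqrt` (removed since), spelled out for `2×2` matrices. -/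
def psdSqrtOld {A : Mat2} (hA : A.IsHermitian) : Mat2 :=
  (hA.eigenvectorUnitary : Mat2) * Matrix.diagonal ((↑) ∘ Real.sqrt ∘ hA.eigenvalues) *
    (star hA.eigenvectorUnitary : Mat2)

theorem psdSqrtOld_isHermitian {A : Mat2} (hA : A.IsHermitian) : (psdSqrtOld hA).IsHermitian := by
  have h : star (Complex.ofReal ∘ Real.sqrt ∘ hA.eigenvalues) = Complex.ofReal ∘ Real.sqrt ∘ hA.eigenvalues := by
    funext i
    simp
  simp [psdSqrtOld, Matrix.IsHermitian, conjTranspose_mul, diagonal_conjTranspose, Matrix.mul_assoc, h,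
    star_eq_conjTranspose]

def wMat (υ : ℤ → Mat2) (n : ℤ) : Mat2 :=
  psdSqrtOld (Matrix.posSemidef_conjTranspose_mul_self (υ n)).1

def sqrtwMat (υ : ℤ → Mat2) (n : ℤ) : Mat2 :=
  psdSqrtOld (psdSqrtOld_isHermitian (Matrix.posSemidef_conjTranspose_mul_self (υ n)).1)

/-- The Birman–Schwinger operator `K(z) = √W (D₀ − z)⁻¹ U √W`. -/
def Kop (D0 sW Uop : Hsp →L[ℂ] Hsp) (z : ℂ) : Hsp →L[ℂ] Hsp :=
  sW * Ring.inverse (D0 - z • (1 : Hsp →L[ℂ] Hsp)) * Uop * sW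

/-- The element of `ℓ²(ℤ, ℂ²)` supported at site `j` equal to the `β`-th standard basis vector. -/
def deltaVec (j : ℤ) (β : Fin 2) : Hsp := lp.single 2 j (EuclideanSpace.single β (1 : ℂ))

/-!
The Birman–Schwinger principle is pure algebra once `V = U √W √W`. With `R = (D₀ - λ)⁻¹`,
`D₀ + V - λ = (D₀ - λ)(1 + R V)`, so `λ ∈ σ(D₀ + V)` iff `-1 ∈ σ(R V)`; and
`R V = (R U √W) √W` while `K(λ) = √W (R U √W)`, and `-1` lies in the spectrum of `a b` iff it
lies in that of `b a`.
-/

section BirmanSchwinger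

variable {𝕜 A : Type*} [CommRing 𝕜] [Ring A] [Algebra 𝕜 A]

theorem spectrum.neg_one_mem_iff (a : A) : (-1 : 𝕜) ∈ spectrum 𝕜 a ↔ ¬IsUnit (1 + a) := by
  rw [spectrum.mem_iff, map_neg, map_one, ← neg_add', IsUnit.neg_iff]

theorem spectrum.neg_one_mem_mul_comm (a b : A) :
    (-1 : 𝕜) ∈ spectrum 𝕜 (a * b) ↔ (-1 : 𝕜) ∈ spectrum 𝕜 (b * a) := by
  simpa using spectrum.unit_mem_mul_comm (R := 𝕜) (r := -1) (a := a) (b := b)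

theorem spectrum.mem_add_iff_neg_one_mem_inverse_mul {D V : A} {z : 𝕜}
    (hz : z ∉ spectrum 𝕜 D) :
    z ∈ spectrum 𝕜 (D + V) ↔ (-1 : 𝕜) ∈ spectrum 𝕜 (Ring.inverse (D - z • 1) * V) := by
  have hL : IsUnit (D - z • 1) := by
    rw [← neg_sub, Algebra.smul_def, mul_one, IsUnit.neg_iff]
    exact spectrum.notMem_iff.mp hz
  have hfactor : algebraMap 𝕜 A z - (D + V) = -((D - z • 1) * (1 + Ring.inverse (D - z • 1) * V)) := by
    rw [mul_add, mul_one, ← mul_assoc, Ring.mul_inverse_cancel _ hL, one_mul, Algebra.algebraMap_eq_smul_one]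
    abel
  rw [spectrum.mem_iff, hfactor, IsUnit.neg_iff, ← hL.unit_spec, Units.isUnit_units_mul,
    spectrum.neg_one_mem_iff]

theorem spectrum.mem_add_iff_neg_one_mem_birmanSchwinger {D U S : A} {z : 𝕜}
    (hz : z ∉ spectrum 𝕜 D) :
    z ∈ spectrum 𝕜 (D + U * (S * S)) ↔
      (-1 : 𝕜) ∈ spectrum 𝕜 (S * Ring.inverse (D - z • 1) * U * S) := by
  rw [spectrum.mem_add_iff_neg_one_mem_inverse_mul hz, mul_assoc _ U S, mul_assoc S,
    spectrum.neg_one_mem_mul_comm S, ← mul_assoc, ← mul_assoc, ← mul_assoc]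

end BirmanSchwinger

theorem psdSqrtOld_mul_self {A : Mat2} (hA : A.PosSemidef) :
    psdSqrtOld hA.1 * psdSqrtOld hA.1 = A := by
  conv_rhs => rw [hA.1.spectral_theorem]
  have hU : (star hA.1.eigenvectorUnitary : Mat2) * (hA.1.eigenvectorUnitary : Mat2) = 1 :=
    Unitary.coe_star_mul_self _
  rw [psdSqrtOld, show ∀ P Q R : Mat2, P * Q * R * (P * Q * R) = P * (Q * (R * P) * Q) * R by
    intro P Q R; simp only [Matrix.mul_assoc], hU, Matrix.mul_one, diagonal_mul_diagonal,
    Unitary.conjStarAlgAut_apply]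
  congr 3
  funext i
  simp [← Complex.ofReal_mul, Real.mul_self_sqrt (hA.eigenvalues_nonneg i)]

theorem psdSqrtOld_posSemidef {A : Mat2} (hA : A.IsHermitian) : (psdSqrtOld hA).PosSemidef := by
  have hD : (diagonal ((↑) ∘ Real.sqrt ∘ hA.eigenvalues : Fin 2 → ℂ)).PosSemidef :=
    posSemidef_diagonal_iff.mpr (fun i => by simp [Real.sqrt_nonneg])
  simpa [psdSqrtOld, star_eq_conjTranspose] using
    hD.mul_mul_conjTranspose_same (hA.eigenvectorUnitary : Mat2)

theorem sqrtwMat_mul_self (υ : ℤ → Mat2) (n : ℤ) : sqrtwMat υ n * sqrtwMat υ n = wMat υ n :=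
  psdSqrtOld_mul_self (psdSqrtOld_posSemidef _)

namespace IsBlockDiagOp

theorem mul {a b : ℤ → Mat2} {A B : Hsp →L[ℂ] Hsp} (hA : IsBlockDiagOp a A)
    (hB : IsBlockDiagOp b B) : IsBlockDiagOp (a * b) (A * B) := fun x n => by
  change A (B x) n = _
  rw [hA, hB, Pi.mul_apply, mAct, mAct, mAct, map_mul]
  rfl

theorem unique {υ : ℤ → Mat2} {A B : Hsp →L[ℂ] Hsp} (hA : IsBlockDiagOp υ A)
    (hB : IsBlockDiagOp υ B) : A = B :=
  ContinuousLinearMap.ext fun x => lp.ext <| funext fun n => by rw [hA, hB]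

end IsBlockDiagOp

theorem stmt12_general (υ u : ℤ → Mat2)
    (hpolar : ∀ n, υ n = u n * wMat υ n)
    (D0 Vop sW Uop : Hsp →L[ℂ] Hsp)
    (hVop : IsBlockDiagOp υ Vop)
    (hsW : IsBlockDiagOp (sqrtwMat υ) sW) (hU : IsBlockDiagOp u Uop)
    (lam : ℂ) (hlam : lam ∉ spectrum ℂ D0) :
    lam ∈ spectrum ℂ (D0 + Vop) ↔ (-1 : ℂ) ∈ spectrum ℂ (Kop D0 sW Uop lam) := by
  have hυ : υ = u * (sqrtwMat υ * sqrtwMat υ) := funext fun n => by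
    simp only [Pi.mul_apply, sqrtwMat_mul_self, ← hpolar]
  have hVop_eq : Vop = Uop * (sW * sW) := hVop.unique (hυ ▸ hU.mul (hsW.mul hsW))
  rw [hVop_eq, Kop]
  exact spectrum.mem_add_iff_neg_one_mem_birmanSchwinger hlam

/-- Birman–Schwinger principle: for bounded `V` and `λ ∉ σ(D₀)`,
`λ ∈ σ(D_V) ↔ −1 ∈ σ(K(λ))`. -/
theorem stmt12 (m : ℝ) (hm : 0 ≤ m) (υ u : ℤ → Mat2)
    (hbdd : BddAbove (Set.range fun n => specNorm (υ n)))
    (hpolar : ∀ n, υ n = u n * wMat υ n) (hu : ∀ n, specNorm (u n) ≤ 1)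
    (D0 Vop sW Uop : Hsp →L[ℂ] Hsp)
    (hD0 : IsFreeDirac m D0) (hVop : IsBlockDiagOp υ Vop)
    (hsW : IsBlockDiagOp (sqrtwMat υ) sW) (hU : IsBlockDiagOp u Uop)
    (lam : ℂ) (hlam : lam ∉ spectrum ℂ D0) :
    lam ∈ spectrum ℂ (D0 + Vop) ↔ (-1 : ℂ) ∈ spectrum ℂ (Kop D0 sW Uop lam) :=
  stmt12_general υ u hpolar D0 Vop sW Uop hVop hsW hU lam hlam
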